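/- Let c ≥ 2, ñ ≥ 3, n = cñ, and let W̄_{P^u} and W̄_{P^r} be the uniform-gossiping and effective-resistance gossiping matrices of the c-barbell graph. Then the conductances of the two induced Markov chains are Φ(W̄_{P^u}) = 1/(⌊c/2⌋ · c · ñ³) and Φ(W̄_{P^r}) = 1/(2·⌊c/2⌋ · ñ · (cñ − 1)). -/

import Mathlib

open Matrix BigOperators Finset

/-- The `c`-barbell graph on `c*tn` vertices (0-indexed): for each `k = 0,…,c−1` the block
`B_k = {k*tn,…,(k+1)*tn−1}` induces a complete graph (two vertices are in the same block iff
their values have the same quotient by `tn`), and for each `k = 1,…,c−1` there is a bridge edge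
between vertex `k*tn − 1` and vertex `k*tn` (i.e. between consecutive vertices `i, i+1` with
`(i+1) % tn = 0`). -/
def cBarbell (c tn : ℕ) : SimpleGraph (Fin (c * tn)) where
  Adj i j := i ≠ j ∧ (i.val / tn = j.val / tn ∨
    (j.val = i.val + 1 ∧ (i.val + 1) % tn = 0) ∨
    (i.val = j.val + 1 ∧ (j.val + 1) % tn = 0))
  symm := by
    constructor
    rintro i j ⟨hne, h⟩
    refine ⟨hne.symm, ?_⟩
    rcases h with h | h | h
    · exact Or.inl h.symm
    · exact Or.inr (Or.inr h)
    · exact Or.inr (Or.inl h)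
  loopless := by constructor; rintro i ⟨hne, -⟩; exact hne rfl

instance (c tn : ℕ) : DecidableRel (cBarbell c tn).Adj := fun i j =>
  inferInstanceAs (Decidable (i ≠ j ∧ (i.val / tn = j.val / tn ∨
    (j.val = i.val + 1 ∧ (i.val + 1) % tn = 0) ∨
    (i.val = j.val + 1 ∧ (j.val + 1) % tn = 0))))

/-- The uniform edge-activation probability matrix: `P^u_{ij} = 1/(n d_i)` on edges, `0` else. -/
noncomputable def probUnif {n : ℕ} (G : SimpleGraph (Fin n)) [DecidableRel G.Adj] :
    Matrix (Fin n) (Fin n) ℝ :=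
  Matrix.of fun i j => if G.Adj i j then 1 / ((n : ℝ) * (G.degree i : ℝ)) else 0

/-- The uniform-gossiping matrix `W̄_{P^u} = I − D^u/2 + (P^u + (P^u)ᵀ)/2`, where
`D^u_{ii} = Σ_j (P^u_{ij} + P^u_{ji})`. -/
noncomputable def gossipUnif {n : ℕ} (G : SimpleGraph (Fin n)) [DecidableRel G.Adj] :
    Matrix (Fin n) (Fin n) ℝ :=
  (1 : Matrix (Fin n) (Fin n) ℝ)
    - (1 / 2 : ℝ) • Matrix.diagonal (fun i => ∑ j, (probUnif G i j + probUnif G j i))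
    + (1 / 2 : ℝ) • (probUnif G + (probUnif G)ᵀ)

/-- The effective-resistance edge-activation probabilities on the `c`-barbell graph with
`n = c*tn`: `1/(2(n−1))` on bridge edges, `1/(tn(n−1))` on edges within a block, `0` else. -/
noncomputable def probResCBarbell (c tn : ℕ) : Matrix (Fin (c * tn)) (Fin (c * tn)) ℝ :=
  Matrix.of fun i j =>
    if (cBarbell c tn).Adj i j then
      (if i.val / tn = j.val / tn then 1 / ((tn : ℝ) * ((c : ℝ) * (tn : ℝ) - 1))
       else 1 / (2 * ((c : ℝ) * (tn : ℝ) - 1)))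
    else 0

/-- The effective-resistance gossiping matrix `W̄_{P^r} = I − D^r/2 + P^r` of the `c`-barbell
graph, where `D^r_{ii} = 2 Σ_j P^r_{ij}`. -/
noncomputable def gossipResCBarbell (c tn : ℕ) : Matrix (Fin (c * tn)) (Fin (c * tn)) ℝ :=
  (1 : Matrix (Fin (c * tn)) (Fin (c * tn)) ℝ)
    - (1 / 2 : ℝ) • Matrix.diagonal (fun i => 2 * ∑ j, probResCBarbell c tn i j)
    + probResCBarbell c tn

/-- The set of conductance values `Φ_S(W)` over nonempty proper subsets `S`, where
`Φ_S(W) = (Σ_{i∈S, j∉S} W_{ij}) / min(|S|, n−|S|)`. -/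
def conductanceValues {n : ℕ} (W : Matrix (Fin n) (Fin n) ℝ) : Set ℝ :=
  {x : ℝ | ∃ S : Finset (Fin n), S.Nonempty ∧ S ≠ Finset.univ ∧
    x = (∑ i ∈ S, ∑ j ∈ Sᶜ, W i j) / ((min S.card (n - S.card) : ℕ) : ℝ)}

/-!
Both gossiping matrices are instances of one pattern (`IsBarbellWeight`): off-diagonal entries
are nonnegative, vanish off the graph, are at least `β` inside a clique and equal `γ` on bridges.
For the uniform matrix `β = γ = 1/(n tn)`, because every degree is at most `tn`, with equality at
the endpoints of a bridge.

For such a matrix the first `⌊c/2⌋` cliques form a set crossed by a single bridge, which gives the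
value `γ / (⌊c/2⌋ tn)`. Conversely, a set that splits a clique into parts of sizes `a + b = tn`
crosses `a b ≥ tn - 1` edges of weight at least `β`, which beats `γ ⌊n/2⌋ / (⌊c/2⌋ tn)`; a set
that is a union of cliques crosses some bridge, and its size is a multiple of `tn`, so
`min(|S|, n - |S|) ≤ ⌊c/2⌋ tn`.
-/
section Cut

variable {ι : Type*} [Fintype ι] [DecidableEq ι]

def cutWeight (W : Matrix ι ι ℝ) (S : Finset ι) : ℝ :=
  ∑ i ∈ S, ∑ j ∈ Sᶜ, W i j

lemma sum_sum_le_cutWeight {W : Matrix ι ι ℝ} (hW : ∀ i j, i ≠ j → 0 ≤ W i j)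
    {S A B : Finset ι} (hA : A ⊆ S) (hB : B ⊆ Sᶜ) :
    ∑ i ∈ A, ∑ j ∈ B, W i j ≤ cutWeight W S := by
  have hcross : ∀ i ∈ S, ∀ j ∈ Sᶜ, 0 ≤ W i j := fun i hi j hj =>
    hW i j (by rintro rfl; exact mem_compl.1 hj hi)
  calc ∑ i ∈ A, ∑ j ∈ B, W i j ≤ ∑ i ∈ A, ∑ j ∈ Sᶜ, W i j :=
        sum_le_sum fun i hi => sum_le_sum_of_subset_of_nonneg hB fun j hj _ => hcross i (hA hi) j hj
    _ ≤ cutWeight W S :=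
        sum_le_sum_of_subset_of_nonneg hA fun i hi _ => sum_nonneg (hcross i hi)

end Cut

lemma Nat.exists_not_iff_succ_of_not_iff {P : ℕ → Prop} {a b : ℕ} (hab : a ≤ b)
    (h : ¬(P a ↔ P b)) : ∃ k, a ≤ k ∧ k < b ∧ ¬(P k ↔ P (k + 1)) := by
  induction b, hab using Nat.le_induction with
  | base => exact absurd Iff.rfl h
  | succ n han ih =>
    by_cases hn : P a ↔ P n
    · exact ⟨n, han, n.lt_succ_self, fun h' => h (hn.trans h')⟩
    · obtain ⟨k, hak, hkn, hk⟩ := ih hn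
      exact ⟨k, hak, by omega, hk⟩

lemma Nat.min_mul_sub_mul_le_div_two_mul (c tn t : ℕ) :
    min (tn * t) (c * tn - tn * t) ≤ c / 2 * tn := by
  rcases le_or_gt t (c / 2) with ht | ht
  · calc min (tn * t) (c * tn - tn * t) ≤ tn * t := min_le_left _ _
      _ ≤ c / 2 * tn := by rw [mul_comm]; exact Nat.mul_le_mul_right tn ht
  · calc min (tn * t) (c * tn - tn * t) ≤ (c - t) * tn := by
          rw [Nat.sub_mul, mul_comm t]; exact min_le_right _ _
      _ ≤ c / 2 * tn := Nat.mul_le_mul_right tn (by omega)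

lemma Nat.mul_div_two_le_sub_one_mul {c tn : ℕ} (hc : 2 ≤ c) (htn : 3 ≤ tn) :
    c * tn / 2 ≤ (tn - 1) * (c / 2 * tn) := by
  refine Nat.div_le_of_le_mul ?_
  calc c * tn ≤ (2 * 2) * (c / 2 * tn) := by
        rw [← mul_assoc]; exact Nat.mul_le_mul_right tn (by omega)
    _ ≤ 2 * (tn - 1) * (c / 2 * tn) := Nat.mul_le_mul_right _ (by omega)
    _ = 2 * ((tn - 1) * (c / 2 * tn)) := by ring

-- Equality holds for `c = tn = 3`, so the floor in `c * tn / 2` cannot be dropped.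
lemma Nat.mul_div_two_le_two_mul_sub_one_mul {c tn : ℕ} (hc : 2 ≤ c) (htn : 3 ≤ tn) :
    c * tn / 2 ≤ 2 * ((tn - 1) * (c / 2)) := by
  obtain ⟨p, hp⟩ : ∃ p, c / 2 = p + 1 := ⟨c / 2 - 1, by omega⟩
  obtain ⟨t, rfl⟩ : ∃ t, tn = t + 3 := ⟨tn - 3, by omega⟩
  have hc' : c * (t + 3) ≤ (2 * p + 3) * (t + 3) := Nat.mul_le_mul_right _ (by omega)
  rw [hp, show t + 3 - 1 = t + 2 by omega]
  have : (2 * p + 3) * (t + 3) ≤ 2 * (2 * ((t + 2) * (p + 1))) + 1 := by nlinarith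
  omega

section Blocks

variable {c tn : ℕ}

lemma card_filter_div_eq (htn : 0 < tn) {k : ℕ} (hk : k < c) :
    #{j : Fin (c * tn) | j.val / tn = k} = tn := by
  have hsucc : (k + 1) * tn = k * tn + tn := by ring
  have hblock : univ.filter (fun j : Fin (c * tn) => j.val / tn = k) =
      univ.filter (fun j : Fin (c * tn) => j.val < (k + 1) * tn) \
        univ.filter (fun j : Fin (c * tn) => j.val < k * tn) := by
    ext j
    simp only [mem_filter, mem_univ, true_and, mem_sdiff, Nat.div_eq_iff htn]
    omega
  have hsub : univ.filter (fun j : Fin (c * tn) => j.val < k * tn) ⊆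
      univ.filter (fun j : Fin (c * tn) => j.val < (k + 1) * tn) :=
    monotone_filter_right _ fun j hj => by omega
  have hk' : (k + 1) * tn ≤ c * tn := Nat.mul_le_mul_right tn hk
  rw [hblock, card_sdiff_of_subset hsub, Fin.card_filter_val_lt, Fin.card_filter_val_lt]
  omega

lemma cBarbell_bridge (htn : 0 < tn) {i j : Fin (c * tn)} (hij : i.val + 1 = j.val)
    (hj : tn ∣ j.val) : (cBarbell c tn).Adj i j ∧ i.val / tn ≠ j.val / tn := by
  refine ⟨⟨fun h => by simp [h] at hij, Or.inr (Or.inl ⟨hij.symm, ?_⟩)⟩, ?_⟩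
  · rw [hij]; exact Nat.mod_eq_zero_of_dvd hj
  · refine (Nat.div_lt_iff_lt_mul htn |>.2 ?_).ne
    rw [Nat.div_mul_cancel hj]; omega

lemma cBarbell_adj_across (htn : 0 < tn) {m : ℕ} {i j : Fin (c * tn)}
    (hadj : (cBarbell c tn).Adj i j) (hi : i.val < m * tn) (hj : m * tn ≤ j.val) :
    i.val + 1 = m * tn ∧ j.val = m * tn := by
  obtain ⟨-, hblock | ⟨hji, -⟩ | ⟨hij, -⟩⟩ := hadj
  · have : i.val / tn < j.val / tn := lt_of_lt_of_le ((Nat.div_lt_iff_lt_mul htn).2 hi)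
      ((Nat.le_div_iff_mul_le htn).2 hj)
    omega
  · omega
  · omega

lemma cBarbell_adj_of_div_ne {i j : Fin (c * tn)} (hij : (cBarbell c tn).Adj i j)
    (hblock : i.val / tn ≠ j.val / tn) :
    (j.val = i.val + 1 ∧ tn ∣ i.val + 1) ∨ (i.val = j.val + 1 ∧ tn ∣ i.val) := by
  obtain ⟨-, hsame | ⟨hj, hmod⟩ | ⟨hi, hmod⟩⟩ := hij
  · exact absurd hsame hblock
  · exact Or.inl ⟨hj, Nat.dvd_of_mod_eq_zero hmod⟩
  · exact Or.inr ⟨hi, hi ▸ Nat.dvd_of_mod_eq_zero hmod⟩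

lemma cBarbell_eq_of_div_ne (htn : 2 ≤ tn) {i a b : Fin (c * tn)}
    (ha : (cBarbell c tn).Adj i a) (ha' : i.val / tn ≠ a.val / tn)
    (hb : (cBarbell c tn).Adj i b) (hb' : i.val / tn ≠ b.val / tn) : a = b := by
  have hboth : ¬(tn ∣ i.val ∧ tn ∣ i.val + 1) := fun ⟨h, h1⟩ =>
    absurd (Nat.le_of_dvd one_pos ((Nat.dvd_add_right h).1 h1)) (by omega)
  rcases cBarbell_adj_of_div_ne ha ha' with ⟨ha, hia⟩ | ⟨ha, hia⟩ <;>
    rcases cBarbell_adj_of_div_ne hb hb' with ⟨hb, hib⟩ | ⟨hb, hib⟩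
  · exact Fin.ext (by omega)
  · exact absurd ⟨hib, hia⟩ hboth
  · exact absurd ⟨hia, hib⟩ hboth
  · exact Fin.ext (by omega)

lemma cBarbell_degree_le (htn : 2 ≤ tn) (i : Fin (c * tn)) : (cBarbell c tn).degree i ≤ tn := by
  have hk : i.val / tn < c := (Nat.div_lt_iff_lt_mul (by omega)).2 i.isLt
  have hsame : #{j ∈ (cBarbell c tn).neighborFinset i | j.val / tn = i.val / tn} ≤ tn - 1 := by
    calc _ ≤ #(({j : Fin (c * tn) | j.val / tn = i.val / tn} : Finset _).erase i) := by
          refine card_le_card fun j hj => ?_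
          simp only [mem_filter, SimpleGraph.mem_neighborFinset] at hj
          simp [hj.2, hj.1.ne.symm]
      _ = tn - 1 := by rw [card_erase_of_mem (by simp), card_filter_div_eq (by omega) hk]
  have hother : #{j ∈ (cBarbell c tn).neighborFinset i | ¬j.val / tn = i.val / tn} ≤ 1 := by
    refine card_le_one.2 fun a ha b hb => ?_
    simp only [mem_filter, SimpleGraph.mem_neighborFinset] at ha hb
    exact cBarbell_eq_of_div_ne htn ha.1 (Ne.symm ha.2) hb.1 (Ne.symm hb.2)
  rw [← SimpleGraph.card_neighborFinset_eq_degree,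
    ← card_filter_add_card_filter_not (fun j : Fin (c * tn) => j.val / tn = i.val / tn)]
  omega

lemma cBarbell_degree_eq_of_div_ne (htn : 2 ≤ tn) {i j : Fin (c * tn)}
    (hij : (cBarbell c tn).Adj i j) (hblock : i.val / tn ≠ j.val / tn) :
    (cBarbell c tn).degree i = tn := by
  have hk : i.val / tn < c := (Nat.div_lt_iff_lt_mul (by omega)).2 i.isLt
  refine le_antisymm (cBarbell_degree_le htn i) ?_
  set B := univ.filter fun a : Fin (c * tn) => a.val / tn = i.val / tn
  calc tn = #(insert j (B.erase i)) := by
        rw [card_insert_of_notMem (by simp [B, Ne.symm hblock]), card_erase_of_mem (by simp [B]),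
          card_filter_div_eq (by omega) hk]
        omega
    _ ≤ #((cBarbell c tn).neighborFinset i) := by
        refine card_le_card (insert_subset ((SimpleGraph.mem_neighborFinset _ _ _).2 hij) ?_)
        intro a ha
        simp only [B, mem_erase, mem_filter, mem_univ, true_and] at ha
        exact (SimpleGraph.mem_neighborFinset _ _ _).2 ⟨Ne.symm ha.1, Or.inl ha.2.symm⟩
    _ = (cBarbell c tn).degree i := SimpleGraph.card_neighborFinset_eq_degree _ _

end Blocks

def IsUnionOfBlocks {n : ℕ} (tn : ℕ) (S : Finset (Fin n)) : Prop :=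
  ∀ i j : Fin n, i.val / tn = j.val / tn → i ∈ S → j ∈ S

section UnionOfBlocks

variable {c tn : ℕ}

lemma IsUnionOfBlocks.dvd_card (htn : 0 < tn) {S : Finset (Fin (c * tn))}
    (hS : IsUnionOfBlocks tn S) : tn ∣ #S := by
  rw [card_eq_sum_card_fiberwise (f := fun i : Fin (c * tn) => i.val / tn) (t := range c)
    fun i _ => mem_range.2 ((Nat.div_lt_iff_lt_mul htn).2 i.isLt)]
  refine dvd_sum fun k hk => ?_
  by_cases hkS : ∃ i ∈ S, i.val / tn = k
  · obtain ⟨i, hi, rfl⟩ := hkS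
    have hfiber : S.filter (fun j : Fin (c * tn) => j.val / tn = i.val / tn) =
        univ.filter (fun j : Fin (c * tn) => j.val / tn = i.val / tn) := by
      ext j
      simp only [mem_filter, mem_univ, true_and, and_iff_right_iff_imp]
      exact fun hj => hS i j hj.symm hi
    rw [hfiber, card_filter_div_eq htn (mem_range.1 hk)]
  · push Not at hkS
    rw [filter_false_of_mem hkS, card_empty]
    exact dvd_zero tn

lemma IsUnionOfBlocks.min_card_le (htn : 0 < tn) {S : Finset (Fin (c * tn))}
    (hS : IsUnionOfBlocks tn S) :
    min #S (c * tn - #S) ≤ c / 2 * tn := by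
  obtain ⟨t, ht⟩ := hS.dvd_card htn
  rw [ht]
  exact Nat.min_mul_sub_mul_le_div_two_mul c tn t

end UnionOfBlocks

structure IsBarbellWeight (c tn : ℕ) (W : Matrix (Fin (c * tn)) (Fin (c * tn)) ℝ) (β γ : ℝ) :
    Prop where
  nonneg : ∀ i j, i ≠ j → 0 ≤ W i j
  eq_zero : ∀ i j, i ≠ j → ¬(cBarbell c tn).Adj i j → W i j = 0
  le_of_div_eq : ∀ i j, i ≠ j → i.val / tn = j.val / tn → β ≤ W i j
  eq_of_div_ne : ∀ i j, (cBarbell c tn).Adj i j → i.val / tn ≠ j.val / tn → W i j = γ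

namespace IsBarbellWeight

variable {c tn : ℕ} {W : Matrix (Fin (c * tn)) (Fin (c * tn)) ℝ} {β γ : ℝ}
  (hW : IsBarbellWeight c tn W β γ)
include hW

lemma cutWeight_filter_val_lt (htn : 0 < tn) {m : ℕ} (hm : 0 < m) (hmc : m < c) :
    cutWeight W (univ.filter fun i : Fin (c * tn) => i.val < m * tn) = γ := by
  have hmtn : m * tn < c * tn := Nat.mul_lt_mul_of_pos_right hmc htn
  have hpos : 0 < m * tn := Nat.mul_pos hm htn
  set a : Fin (c * tn) := ⟨m * tn - 1, by omega⟩
  set b : Fin (c * tn) := ⟨m * tn, hmtn⟩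
  have hbridge := cBarbell_bridge (i := a) (j := b) htn (by simp only [a, b]; omega)
    (Dvd.intro_left m rfl)
  rw [cutWeight, ← sum_product' (f := fun i j => W i j),
    sum_eq_single_of_mem (a, b) (by simp [a, b]; omega)]
  · exact hW.eq_of_div_ne a b hbridge.1 hbridge.2
  · rintro ⟨i, j⟩ hij hne
    simp only [mem_product, mem_filter, mem_univ, true_and, mem_compl, not_lt] at hij
    refine hW.eq_zero i j (fun h => by subst h; omega) fun hadj => hne ?_
    obtain ⟨hi, hj⟩ := cBarbell_adj_across htn hadj hij.1 hij.2
    simp only [Prod.mk.injEq, a, b, Fin.ext_iff]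
    omega

lemma le_cutWeight_of_adj {S : Finset (Fin (c * tn))} {i j : Fin (c * tn)}
    (hadj : (cBarbell c tn).Adj i j) (hblock : i.val / tn ≠ j.val / tn) (hi : i ∈ S)
    (hj : j ∉ S) : γ ≤ cutWeight W S := by
  rw [← hW.eq_of_div_ne i j hadj hblock]
  simpa using sum_sum_le_cutWeight hW.nonneg (singleton_subset_iff.2 hi)
    (singleton_subset_iff.2 (mem_compl.2 hj))


lemma sub_one_mul_le_cutWeight (hβ : 0 ≤ β) {S : Finset (Fin (c * tn))} {i j : Fin (c * tn)}
    (hi : i ∈ S) (hj : j ∉ S) (hblock : i.val / tn = j.val / tn) :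
    ((tn - 1 : ℕ) : ℝ) * β ≤ cutWeight W S := by
  have htn : 0 < tn := Nat.pos_of_mul_pos_left i.pos
  set B := univ.filter fun a : Fin (c * tn) => a.val / tn = i.val / tn
  set T₁ := B.filter (· ∈ S)
  set T₂ := B.filter (· ∉ S)
  have hcard : #T₁ + #T₂ = tn := by
    rw [card_filter_add_card_filter_not, card_filter_div_eq htn
      ((Nat.div_lt_iff_lt_mul htn).2 i.isLt)]
  have h₁ : 0 < #T₁ := card_pos.2 ⟨i, by simp [T₁, B, hi]⟩
  have h₂ : 0 < #T₂ := card_pos.2 ⟨j, by simp [T₂, B, hj, hblock]⟩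
  have hprod : tn - 1 ≤ #T₁ * #T₂ := by
    have : #T₁ + #T₂ ≤ #T₁ * #T₂ + 1 := by nlinarith
    omega
  calc ((tn - 1 : ℕ) : ℝ) * β ≤ ((#T₁ * #T₂ : ℕ) : ℝ) * β := by gcongr
    _ = ∑ a ∈ T₁, ∑ b ∈ T₂, β := by simp [sum_const, mul_assoc]
    _ ≤ ∑ a ∈ T₁, ∑ b ∈ T₂, W a b := by
        refine sum_le_sum fun a ha => sum_le_sum fun b hb => ?_
        simp only [T₁, T₂, B, mem_filter, mem_univ, true_and] at ha hb
        exact hW.le_of_div_eq a b (by rintro rfl; exact hb.2 ha.2) (ha.1.trans hb.1.symm)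
    _ ≤ cutWeight W S := sum_sum_le_cutWeight hW.nonneg (fun a ha => (mem_filter.1 ha).2)
        fun b hb => mem_compl.2 (mem_filter.1 hb).2

lemma le_cutWeight_of_isUnionOfBlocks {S : Finset (Fin (c * tn))}
    (hS : IsUnionOfBlocks tn S)
    (hne : S.Nonempty) (huniv : S ≠ univ) : γ ≤ cutWeight W S := by
  obtain ⟨i₀, hi₀⟩ := hne
  obtain ⟨j₀, -, hj₀⟩ := exists_of_ssubset (ssubset_univ_iff.2 huniv)
  have htn : 0 < tn := Nat.pos_of_mul_pos_left i₀.pos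
  set P : ℕ → Prop := fun k => ∃ i ∈ S, i.val / tn = k
  have hP : ∀ i : Fin (c * tn), i ∈ S ↔ P (i.val / tn) :=
    fun i => ⟨fun hi => ⟨i, hi, rfl⟩, fun ⟨i', hi', h⟩ => hS i' i h hi'⟩
  have hblock_lt : ∀ i : Fin (c * tn), i.val / tn < c :=
    fun i => (Nat.div_lt_iff_lt_mul htn).2 i.isLt
  obtain ⟨k, hkc, hk⟩ : ∃ k, k + 1 < c ∧ ¬(P k ↔ P (k + 1)) := by
    by_cases h0 : P 0
    · obtain ⟨k, -, hk, hPk⟩ := Nat.exists_not_iff_succ_of_not_iff (Nat.zero_le (j₀.val / tn))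
        (fun h => hj₀ ((hP j₀).2 (h.1 h0)))
      exact ⟨k, by have := hblock_lt j₀; omega, hPk⟩
    · obtain ⟨k, -, hk, hPk⟩ := Nat.exists_not_iff_succ_of_not_iff (Nat.zero_le (i₀.val / tn))
        (fun h => h0 (h.2 ((hP i₀).1 hi₀)))
      exact ⟨k, by have := hblock_lt i₀; omega, hPk⟩
  have hsucc : (k + 1) * tn = k * tn + tn := by ring
  have hlt : (k + 1) * tn < c * tn := Nat.mul_lt_mul_of_pos_right hkc htn
  set u : Fin (c * tn) := ⟨(k + 1) * tn - 1, by omega⟩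
  set v : Fin (c * tn) := ⟨(k + 1) * tn, hlt⟩
  obtain ⟨hadj, hblock⟩ := cBarbell_bridge (i := u) (j := v) htn (by simp only [u, v]; omega)
    (Dvd.intro_left _ rfl)
  have hu : u.val / tn = k := (Nat.div_eq_iff htn).2 (by simp only [u]; omega)
  have hv : v.val / tn = k + 1 := (Nat.div_eq_iff htn).2 (by simp only [v]; omega)
  rw [← hv, ← hu, ← hP u, ← hP v] at hk
  by_cases huS : u ∈ S
  · exact hW.le_cutWeight_of_adj hadj hblock huS fun hvS => hk (iff_of_true huS hvS)
  · have hvS : v ∈ S := by_contra fun hvS => hk (iff_of_false huS hvS)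
    exact hW.le_cutWeight_of_adj hadj.symm (Ne.symm hblock) hvS huS

theorem isLeast_conductanceValues (hc : 2 ≤ c) (htn : 0 < tn) (hβ : 0 ≤ β) (hγ : 0 ≤ γ)
    (hβγ : γ * ((c * tn / 2 : ℕ) : ℝ) ≤ ((tn - 1 : ℕ) : ℝ) * β * ((c / 2 * tn : ℕ) : ℝ)) :
    IsLeast (conductanceValues W) (γ / ((c / 2 * tn : ℕ) : ℝ)) := by
  have hq : 0 < c / 2 * tn := Nat.mul_pos (by omega) htn
  have hqc : c / 2 * tn < c * tn := Nat.mul_lt_mul_of_pos_right (by omega) htn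
  have hq2 : 2 * (c / 2 * tn) ≤ c * tn := by
    rw [← mul_assoc]; exact Nat.mul_le_mul_right tn (by omega)
  constructor
  · have hcard : #(univ.filter fun i : Fin (c * tn) => i.val < c / 2 * tn) = c / 2 * tn := by
      rw [Fin.card_filter_val_lt]; omega
    refine ⟨univ.filter fun i => i.val < c / 2 * tn, ⟨⟨0, by omega⟩, by simpa using hq⟩,
      fun h => ?_, ?_⟩
    · rw [h, card_univ, Fintype.card_fin] at hcard
      omega
    · rw [← cutWeight, hW.cutWeight_filter_val_lt htn (by omega) (by omega), hcard,
        min_eq_left (by omega)]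
  · rintro x ⟨S, hne, huniv, rfl⟩
    have hS : #S < c * tn := by simpa using card_lt_card (ssubset_univ_iff.2 huniv)
    have hm : (0 : ℝ) < (min #S (c * tn - #S) : ℕ) := by
      have := hne.card_pos
      exact_mod_cast (by omega : 0 < min #S (c * tn - #S))
    rw [le_div_iff₀ hm, ← cutWeight]
    by_cases hsat : IsUnionOfBlocks tn S
    · calc γ / ((c / 2 * tn : ℕ) : ℝ) * (min #S (c * tn - #S) : ℕ)
          ≤ γ / ((c / 2 * tn : ℕ) : ℝ) * ((c / 2 * tn : ℕ) : ℝ) := by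
            gcongr; exact hsat.min_card_le htn
        _ = γ := div_mul_cancel₀ γ (by positivity)
        _ ≤ cutWeight W S := hW.le_cutWeight_of_isUnionOfBlocks hsat hne huniv
    · obtain ⟨i, j, hij, hi, hj⟩ : ∃ i j : Fin (c * tn), i.val / tn = j.val / tn ∧ i ∈ S ∧ j ∉ S :=
        by simpa [IsUnionOfBlocks] using hsat
      calc γ / ((c / 2 * tn : ℕ) : ℝ) * (min #S (c * tn - #S) : ℕ)
          ≤ γ / ((c / 2 * tn : ℕ) : ℝ) * ((c * tn / 2 : ℕ) : ℝ) := by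
            gcongr; omega
        _ ≤ ((tn - 1 : ℕ) : ℝ) * β := by
            rw [div_mul_eq_mul_div, div_le_iff₀ (by positivity)]; exact hβγ
        _ ≤ cutWeight W S := hW.sub_one_mul_le_cutWeight hβ hi hj hij

end IsBarbellWeight

section Gossip

variable {c tn : ℕ}

lemma gossipUnif_apply_of_ne {n : ℕ} (G : SimpleGraph (Fin n)) [DecidableRel G.Adj]
    {i j : Fin n} (h : i ≠ j) :
    gossipUnif G i j = (probUnif G i j + probUnif G j i) / 2 := by
  simp only [gossipUnif, Matrix.add_apply, Matrix.sub_apply, Matrix.smul_apply, one_apply_ne h,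
    diagonal_apply_ne _ h, transpose_apply, smul_eq_mul]
  ring

lemma gossipResCBarbell_apply_of_ne {i j : Fin (c * tn)} (h : i ≠ j) :
    gossipResCBarbell c tn i j = probResCBarbell c tn i j := by
  simp [gossipResCBarbell, one_apply_ne h, diagonal_apply_ne _ h]

lemma probUnif_nonneg {n : ℕ} (G : SimpleGraph (Fin n)) [DecidableRel G.Adj] (i j : Fin n) :
    0 ≤ probUnif G i j := by
  rw [probUnif, of_apply]; split_ifs <;> positivity

lemma le_probUnif_cBarbell (htn : 2 ≤ tn) {i j : Fin (c * tn)} (h : (cBarbell c tn).Adj i j) :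
    1 / (((c * tn : ℕ) : ℝ) * tn) ≤ probUnif (cBarbell c tn) i j := by
  have hdeg : 0 < (cBarbell c tn).degree i := (SimpleGraph.degree_pos_iff_exists_adj _ _).2 ⟨j, h⟩
  have hn : 0 < c * tn := Fin.pos i
  rw [probUnif, of_apply, if_pos h]
  gcongr
  exact_mod_cast cBarbell_degree_le htn i

lemma isBarbellWeight_gossipUnif (htn : 2 ≤ tn) :
    IsBarbellWeight c tn (gossipUnif (cBarbell c tn)) (1 / (((c * tn : ℕ) : ℝ) * tn))
      (1 / (((c * tn : ℕ) : ℝ) * tn)) where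
  nonneg i j h := by
    rw [gossipUnif_apply_of_ne _ h]
    have := probUnif_nonneg (cBarbell c tn) i j
    have := probUnif_nonneg (cBarbell c tn) j i
    positivity
  eq_zero i j h hadj := by
    rw [gossipUnif_apply_of_ne _ h, probUnif, of_apply, of_apply, if_neg hadj,
      if_neg fun h' => hadj h'.symm]
    norm_num
  le_of_div_eq i j h hblock := by
    rw [gossipUnif_apply_of_ne _ h]
    have := le_probUnif_cBarbell htn (i := i) (j := j) ⟨h, Or.inl hblock⟩
    have := le_probUnif_cBarbell htn (i := j) (j := i) ⟨h.symm, Or.inl hblock.symm⟩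
    linarith
  eq_of_div_ne i j hadj hblock := by
    rw [gossipUnif_apply_of_ne _ hadj.ne, probUnif, of_apply, of_apply, if_pos hadj,
      if_pos hadj.symm, cBarbell_degree_eq_of_div_ne htn hadj hblock,
      cBarbell_degree_eq_of_div_ne htn hadj.symm (Ne.symm hblock)]
    ring

lemma isBarbellWeight_gossipResCBarbell :
    IsBarbellWeight c tn (gossipResCBarbell c tn) (1 / ((tn : ℝ) * ((c : ℝ) * (tn : ℝ) - 1)))
      (1 / (2 * ((c : ℝ) * (tn : ℝ) - 1))) where
  nonneg i j h := by
    have : (1 : ℝ) ≤ (c : ℝ) * tn := by exact_mod_cast Fin.pos i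
    rw [gossipResCBarbell_apply_of_ne h, probResCBarbell, of_apply]
    split_ifs <;> positivity
  eq_zero i j h hadj := by
    rw [gossipResCBarbell_apply_of_ne h, probResCBarbell, of_apply, if_neg hadj]
  le_of_div_eq i j h hblock := by
    rw [gossipResCBarbell_apply_of_ne h, probResCBarbell, of_apply,
      if_pos ⟨h, Or.inl hblock⟩, if_pos hblock]
  eq_of_div_ne i j hadj hblock := by
    rw [gossipResCBarbell_apply_of_ne hadj.ne, probResCBarbell, of_apply, if_pos hadj,
      if_neg hblock]

end Gossip

/-- The conductance (the minimum of `Φ_S(W)` over nonempty proper `S`) of the uniform-gossiping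
chain on the `c`-barbell graph is `1/(⌊c/2⌋ c tn³)` and that of the effective-resistance
gossiping chain is `1/(2 ⌊c/2⌋ tn (c tn − 1))`. -/
theorem stmt9 (c tn : ℕ) (hc : 2 ≤ c) (htn : 3 ≤ tn) :
    IsLeast (conductanceValues (gossipUnif (cBarbell c tn)))
      (1 / (((c / 2 : ℕ) : ℝ) * (c : ℝ) * (tn : ℝ) ^ 3)) ∧
    IsLeast (conductanceValues (gossipResCBarbell c tn))
      (1 / (2 * ((c / 2 : ℕ) : ℝ) * (tn : ℝ) * ((c : ℝ) * (tn : ℝ) - 1))) := by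
  have hN : (0 : ℝ) < (c : ℝ) * tn - 1 := by
    have : (6 : ℝ) ≤ (c : ℝ) * tn := by exact_mod_cast Nat.mul_le_mul hc htn
    linarith
  constructor
  · convert (isBarbellWeight_gossipUnif (c := c) (tn := tn) (by omega)).isLeast_conductanceValues
      hc (by omega) (by positivity) (by positivity) ?_ using 1
    · push_cast; field_simp
    · rw [mul_comm _ (1 / _), mul_assoc]
      exact mul_le_mul_of_nonneg_left (by exact_mod_cast Nat.mul_div_two_le_sub_one_mul hc htn)
        (by positivity)
  · convert (isBarbellWeight_gossipResCBarbell (c := c) (tn := tn)).isLeast_conductanceValues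
      hc (by omega) (by positivity) (by positivity) ?_ using 1
    · push_cast; field_simp
    · have key : ((c * tn / 2 : ℕ) : ℝ) ≤ 2 * (((tn - 1 : ℕ) : ℝ) * ((c / 2 : ℕ) : ℝ)) := by
        exact_mod_cast Nat.mul_div_two_le_two_mul_sub_one_mul hc htn
      calc 1 / (2 * ((c : ℝ) * tn - 1)) * ((c * tn / 2 : ℕ) : ℝ)
          ≤ 1 / (2 * ((c : ℝ) * tn - 1)) * (2 * (((tn - 1 : ℕ) : ℝ) * ((c / 2 : ℕ) : ℝ))) := by
            gcongr
        _ = _ := by push_cast; field_simp
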